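/- Let a ≥ 3 be an integer and let β be the unique real root greater than 1 of the polynomial P(X) = X^3 − aX^2 − (a−1)X + 1. Then L_⊗(β) = 2. -/

import Mathlib

open Polynomial

/-- The β-transformation `T_β(x) = βx - ⌊βx⌋`. -/
noncomputable def betaT (β : ℝ) : ℝ → ℝ := fun x => β * x - ⌊β * x⌋

/-- `fin(β)`: reals `x` such that `|x|/β^N ∈ [0,1)` and the greedy expansion of
`|x|/β^N` is finite, for some `N, n ∈ ℕ`. -/
def finBeta (β : ℝ) : Set ℝ :=
  {x | ∃ N n : ℕ, |x| / β ^ N ∈ Set.Ico (0 : ℝ) 1 ∧ (betaT β)^[n] (|x| / β ^ N) = 0}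

/-- `ℤ_β`: the set of β-integers. -/
def betaInt (β : ℝ) : Set ℝ :=
  {x | ∃ N : ℕ, |x| / β ^ N ∈ Set.Ico (0 : ℝ) 1 ∧ (betaT β)^[N] (|x| / β ^ N) = 0}

/-- `L_⊕(β)`: the least `L ∈ ℕ` such that `β^L·(x+y) ∈ ℤ_β` for all
`x, y ∈ ℤ_β` with `x + y ∈ fin(β)`. -/
noncomputable def Lplus (β : ℝ) : ℕ :=
  sInf {L : ℕ | ∀ x ∈ betaInt β, ∀ y ∈ betaInt β,
    x + y ∈ finBeta β → β ^ L * (x + y) ∈ betaInt β}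

/-- `L_⊗(β)`: the least `L ∈ ℕ` such that `β^L·(x·y) ∈ ℤ_β` for all
`x, y ∈ ℤ_β` with `x·y ∈ fin(β)`. -/
noncomputable def Lmul (β : ℝ) : ℕ :=
  sInf {L : ℕ | ∀ x ∈ betaInt β, ∀ y ∈ betaInt β,
    x * y ∈ finBeta β → β ^ L * (x * y) ∈ betaInt β}


/-!
The absolute value of a β-integer is `p(β)` for a polynomial `p` with digits in `[0, a]` as
coefficients. If `x y ∈ fin(β)` needs `k` digits after the radix point, then
`p_x(β) p_y(β) β^k = p_z(β)` with `p_z(0) ≥ 1`. The cubic is irreducible over `ℚ`, so this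
identity also holds at its conjugate `γ ∈ (0, 1)`, where `(1 - γ) p(γ) ≤ a` for every digit
polynomial; hence `(1 - γ)² ≤ a² γ^k`, which fails for `k ≥ 3` because `a² γ³ < (1 - γ)²`.

Conversely, since `β > a`, every digit string over `[0, a - 1]` is a greedy expansion, and
`x = (a-1)(β² + β + 1)`, `y = (a-2)β³ + (a-1)(β² + β + 1)` are β-integers with
`x y = (a-2)β⁶ + β⁵ + (a-2)β⁴ + β³ + (a-2)β² + β⁻²`.
-/

section BetaTransformation

variable {β : ℝ}

lemma betaT_mem_Ico (β x : ℝ) : betaT β x ∈ Set.Ico (0 : ℝ) 1 :=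
  ⟨Int.fract_nonneg _, Int.fract_lt_one _⟩

lemma betaT_iterate_mem_Ico {u : ℝ} (hu : u ∈ Set.Ico (0 : ℝ) 1) :
    ∀ n, (betaT β)^[n] u ∈ Set.Ico (0 : ℝ) 1
  | 0 => hu
  | n + 1 => by rw [Function.iterate_succ_apply']; exact betaT_mem_Ico β _

lemma betaT_iterate_zero (n : ℕ) : (betaT β)^[n] 0 = 0 :=
  Function.iterate_fixed (by simp [betaT]) n

lemma betaT_iterate_eq_zero_of_le {u : ℝ} {m n : ℕ} (hmn : m ≤ n) (hm : (betaT β)^[m] u = 0) :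
    (betaT β)^[n] u = 0 := by
  rw [← Nat.sub_add_cancel hmn, Function.iterate_add_apply, hm, betaT_iterate_zero]

lemma betaT_iterate_div_pow (hβ : 1 < β) {v : ℝ} (hv : v ∈ Set.Ico (0 : ℝ) 1) (k : ℕ) :
    (betaT β)^[k] (v / β ^ k) = v := by
  induction k with
  | zero => simp
  | succ k ih =>
    have hvk : v / β ^ k ∈ Set.Ico (0 : ℝ) 1 :=
      ⟨div_nonneg hv.1 (by positivity),
        (div_le_self hv.1 (one_le_pow₀ hβ.le)).trans_lt hv.2⟩
    have hstep : betaT β (v / β ^ (k + 1)) = v / β ^ k := by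
      have hβv : β * (v / β ^ (k + 1)) = v / β ^ k := by
        field_simp; ring
      simp only [betaT, hβv, Int.floor_eq_zero_iff.mpr hvk, Int.cast_zero, sub_zero]
    rw [Function.iterate_succ_apply, hstep, ih]

lemma mem_betaInt_iff (hβ : 1 < β) {x : ℝ} {N : ℕ} (hN : |x| / β ^ N ∈ Set.Ico (0 : ℝ) 1) :
    x ∈ betaInt β ↔ (betaT β)^[N] (|x| / β ^ N) = 0 := by
  have key : ∀ {M N : ℕ}, N ≤ M → |x| / β ^ N ∈ Set.Ico (0 : ℝ) 1 →
      (betaT β)^[M] (|x| / β ^ M) = (betaT β)^[N] (|x| / β ^ N) := by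
    intro M N hNM hN
    obtain ⟨k, rfl⟩ := Nat.exists_eq_add_of_le hNM
    rw [pow_add, ← div_div, Function.iterate_add_apply, betaT_iterate_div_pow hβ hN]
  refine ⟨fun ⟨M, hM, hMx⟩ => ?_, fun h => ⟨N, hN, h⟩⟩
  rcases le_total N M with hNM | hMN
  · rwa [← key hNM hN]
  · rwa [key hMN hM]

lemma pow_mul_mem_betaInt_of_iterate_eq_zero (hβ : 0 < β) {z : ℝ} {N L : ℕ}
    (hN : |z| / β ^ N ∈ Set.Ico (0 : ℝ) 1) (hz : (betaT β)^[N + L] (|z| / β ^ N) = 0) :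
    β ^ L * z ∈ betaInt β := by
  have hshift : |β ^ L * z| / β ^ (N + L) = |z| / β ^ N := by
    rw [abs_mul, abs_pow, abs_of_pos hβ, pow_add]
    field_simp
  exact ⟨N + L, hshift ▸ hN, hshift ▸ hz⟩

lemma one_le_floor_of_betaT_eq_zero (hβ : 0 < β) {v : ℝ} (hv : 0 < v) (h : betaT β v = 0) :
    (1 : ℝ) ≤ ⌊β * v⌋ := by
  have hint : (⌊β * v⌋ : ℝ) = β * v := by
    simp only [betaT] at h; linarith
  have hpos : (0 : ℝ) < ⌊β * v⌋ := by rw [hint]; positivity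
  exact_mod_cast (Int.cast_pos.mp hpos : 0 < ⌊β * v⌋)

end BetaTransformation

section Digits

variable {β : ℝ}

/-- `evalDigits β [d₁, …, dₙ] = d₁ β⁻¹ + ⋯ + dₙ β⁻ⁿ`. -/
noncomputable def evalDigits (β : ℝ) : List ℤ → ℝ
  | [] => 0
  | d :: ds => (d + evalDigits β ds) / β

lemma evalDigits_mem_Ico (hβ : 0 < β) {ds : List ℤ} (hds : ∀ d ∈ ds, 0 ≤ d ∧ (d : ℝ) + 1 ≤ β) :
    evalDigits β ds ∈ Set.Ico (0 : ℝ) 1 := by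
  induction ds with
  | nil => simp [evalDigits]
  | cons d ds ih =>
    obtain ⟨hv0, hv1⟩ := ih fun e he => hds e (List.mem_cons_of_mem d he)
    obtain ⟨hd0, hd1⟩ := hds d List.mem_cons_self
    have hd0' : (0 : ℝ) ≤ d := by exact_mod_cast hd0
    exact ⟨by simp only [evalDigits]; positivity,
      by rw [evalDigits, div_lt_one hβ]; linarith⟩

lemma betaT_iterate_evalDigits (hβ : 0 < β) {ds : List ℤ}
    (hds : ∀ d ∈ ds, 0 ≤ d ∧ (d : ℝ) + 1 ≤ β) (k : ℕ) :
    (betaT β)^[k] (evalDigits β ds) = evalDigits β (ds.drop k) := by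
  induction k generalizing ds with
  | zero => rfl
  | succ k ih =>
    cases ds with
    | nil => simpa [evalDigits] using betaT_iterate_zero (β := β) (k + 1)
    | cons d ds =>
      have hds' : ∀ e ∈ ds, 0 ≤ e ∧ (e : ℝ) + 1 ≤ β := fun e he => hds e (List.mem_cons_of_mem d he)
      have hstep : betaT β (evalDigits β (d :: ds)) = evalDigits β ds := by
        rw [betaT, evalDigits, mul_div_cancel₀ _ hβ.ne', ← Int.fract, Int.fract_intCast_add,
          Int.fract_eq_self.mpr (evalDigits_mem_Ico hβ hds')]
      rw [Function.iterate_succ_apply, hstep, ih hds', List.drop_succ_cons]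

lemma mem_betaInt_of_evalDigits (hβ : 0 < β) {ds : List ℤ}
    (hds : ∀ d ∈ ds, 0 ≤ d ∧ (d : ℝ) + 1 ≤ β) {x : ℝ}
    (hx : |x| / β ^ ds.length = evalDigits β ds) : x ∈ betaInt β :=
  ⟨ds.length, hx ▸ evalDigits_mem_Ico hβ hds, by
    rw [hx, betaT_iterate_evalDigits hβ hds, List.drop_length, evalDigits]⟩

lemma mem_finBeta_of_evalDigits (hβ : 0 < β) {ds : List ℤ}
    (hds : ∀ d ∈ ds, 0 ≤ d ∧ (d : ℝ) + 1 ≤ β) {x : ℝ} {N : ℕ}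
    (hx : |x| / β ^ N = evalDigits β ds) : x ∈ finBeta β :=
  ⟨N, ds.length, hx ▸ evalDigits_mem_Ico hβ hds, by
    rw [hx, betaT_iterate_evalDigits hβ hds, List.drop_length, evalDigits]⟩

lemma notMem_betaInt_of_evalDigits (hβ : 1 < β) {ds : List ℤ}
    (hds : ∀ d ∈ ds, 0 ≤ d ∧ (d : ℝ) + 1 ≤ β) {x : ℝ} {N : ℕ}
    (hx : |x| / β ^ N = evalDigits β ds) (htail : evalDigits β (ds.drop N) ≠ 0) :
    x ∉ betaInt β := by
  have hβ0 : 0 < β := zero_lt_one.trans hβ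
  rwa [mem_betaInt_iff hβ (hx ▸ evalDigits_mem_Ico hβ0 hds), hx,
    betaT_iterate_evalDigits hβ0 hds]

end Digits

section DigitPolynomials

/-- `digitsPoly [d₁, …, dₙ] = d₁ Xⁿ⁻¹ + ⋯ + dₙ`. -/
noncomputable def digitsPoly : List ℤ → ℚ[X]
  | [] => 0
  | d :: ds => C (d : ℚ) * X ^ ds.length + digitsPoly ds

@[simp]
lemma aeval_digitsPoly_nil (t : ℝ) : aeval t (digitsPoly []) = 0 := by
  simp [digitsPoly]

@[simp]
lemma aeval_digitsPoly_cons (t : ℝ) (d : ℤ) (ds : List ℤ) :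
    aeval t (digitsPoly (d :: ds)) = d * t ^ ds.length + aeval t (digitsPoly ds) := by
  simp [digitsPoly]

lemma aeval_digitsPoly_nonneg {ds : List ℤ} (hds : ∀ d ∈ ds, 0 ≤ d) {γ : ℝ} (hγ : 0 ≤ γ) :
    0 ≤ aeval γ (digitsPoly ds) := by
  induction ds with
  | nil => simp
  | cons d ds ih =>
    have hd : (0 : ℝ) ≤ d := by exact_mod_cast hds d List.mem_cons_self
    have hrest := ih fun e he => hds e (List.mem_cons_of_mem d he)
    rw [aeval_digitsPoly_cons]
    positivity

lemma one_sub_mul_aeval_digitsPoly_le {a : ℤ} {ds : List ℤ} (hds : ∀ d ∈ ds, 0 ≤ d ∧ d ≤ a)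
    {γ : ℝ} (hγ0 : 0 ≤ γ) (hγ1 : γ ≤ 1) :
    (1 - γ) * aeval γ (digitsPoly ds) ≤ a * (1 - γ ^ ds.length) := by
  induction ds with
  | nil => simp
  | cons d ds ih =>
    have hd : (d : ℝ) ≤ a := by exact_mod_cast (hds d List.mem_cons_self).2
    have htail := ih fun e he => hds e (List.mem_cons_of_mem d he)
    have hhead : (1 - γ) * (d * γ ^ ds.length) ≤ (1 - γ) * (a * γ ^ ds.length) := by
      gcongr
    rw [aeval_digitsPoly_cons, List.length_cons]
    linear_combination hhead + htail

variable {β : ℝ}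

noncomputable def greedyDigits (β : ℝ) : ℕ → ℝ → List ℤ
  | 0, _ => []
  | n + 1, u => ⌊β * u⌋ :: greedyDigits β n (betaT β u)

lemma length_greedyDigits (n : ℕ) (u : ℝ) : (greedyDigits β n u).length = n := by
  induction n generalizing u with
  | zero => rfl
  | succ n ih => simp [greedyDigits, ih]

lemma greedyDigits_bounds (hβ : 0 < β) {u : ℝ} (hu : u ∈ Set.Ico (0 : ℝ) 1) (n : ℕ) :
    ∀ d ∈ greedyDigits β n u, 0 ≤ d ∧ (d : ℝ) < β := by
  induction n generalizing u with
  | zero => simp [greedyDigits]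
  | succ n ih =>
    rintro d (_ | ⟨_, hd⟩)
    · exact ⟨Int.floor_nonneg.mpr (mul_nonneg hβ.le hu.1),
        (Int.floor_le _).trans_lt (mul_lt_of_lt_one_right hβ hu.2)⟩
    · exact ih (betaT_mem_Ico β u) d hd

lemma pow_mul_eq_aeval_greedyDigits {n : ℕ} {u : ℝ} (h : (betaT β)^[n] u = 0) :
    β ^ n * u = aeval β (digitsPoly (greedyDigits β n u)) := by
  induction n generalizing u with
  | zero => simpa [greedyDigits] using h
  | succ n ih =>
    rw [Function.iterate_succ_apply] at h
    rw [greedyDigits, aeval_digitsPoly_cons, ← ih h, length_greedyDigits, betaT]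
    ring

lemma floor_le_aeval_greedyDigits (hβ : 0 < β) {u : ℝ} (hu : u ∈ Set.Ico (0 : ℝ) 1) (n : ℕ)
    {γ : ℝ} (hγ : 0 ≤ γ) :
    (⌊β * (betaT β)^[n] u⌋ : ℝ) ≤ aeval γ (digitsPoly (greedyDigits β (n + 1) u)) := by
  induction n generalizing u with
  | zero => simp [greedyDigits]
  | succ n ih =>
    have hd : (0 : ℝ) ≤ ⌊β * u⌋ := by exact_mod_cast Int.floor_nonneg.mpr (mul_nonneg hβ.le hu.1)
    rw [Function.iterate_succ_apply, greedyDigits, aeval_digitsPoly_cons]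
    have hrest := ih (betaT_mem_Ico β u)
    have hhead : 0 ≤ (⌊β * u⌋ : ℝ) * γ ^ (greedyDigits β (n + 1) (betaT β u)).length := by
      positivity
    linarith

end DigitPolynomials

section UpperBound

variable {β : ℝ}

lemma exists_digitsPoly_of_mem_betaInt (hβ : 0 < β) {x : ℝ} (hx : x ∈ betaInt β) :
    ∃ ds : List ℤ, (∀ d ∈ ds, 0 ≤ d ∧ (d : ℝ) < β) ∧ |x| = aeval β (digitsPoly ds) := by
  obtain ⟨N, hN, hT⟩ := hx
  refine ⟨greedyDigits β N (|x| / β ^ N), greedyDigits_bounds hβ hN N, ?_⟩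
  rw [← pow_mul_eq_aeval_greedyDigits hT, mul_div_cancel₀ _ (by positivity)]

lemma exists_digitsPoly_of_mem_finBeta (hβ : 0 < β) {z : ℝ} {L : ℕ} (hz : z ∈ finBeta β)
    (hL : β ^ L * z ∉ betaInt β) :
    ∃ ds : List ℤ, ∃ k : ℕ, L < k ∧ (∀ d ∈ ds, 0 ≤ d ∧ (d : ℝ) < β) ∧
      |z| * β ^ k = aeval β (digitsPoly ds) ∧ ∀ γ : ℝ, 0 ≤ γ → 1 ≤ aeval γ (digitsPoly ds) := by
  classical
  obtain ⟨N, n, hN, hn⟩ := hz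
  set u := |z| / β ^ N
  have hex : ∃ n, (betaT β)^[n] u = 0 := ⟨n, hn⟩
  -- The shortest expansion of `u` ends in a nonzero digit, the constant coefficient below.
  have hlong : N + L < Nat.find hex := by
    by_contra! h
    exact hL (pow_mul_mem_betaInt_of_iterate_eq_zero hβ hN
      (betaT_iterate_eq_zero_of_le h (Nat.find_spec hex)))
  obtain ⟨m, hm⟩ := Nat.exists_eq_add_one_of_ne_zero (n := Nat.find hex) (by omega)
  have hlast : (betaT β)^[m + 1] u = 0 := hm ▸ Nat.find_spec hex
  have hlast_pos : 0 < (betaT β)^[m] u :=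
    (betaT_iterate_mem_Ico hN m).1.lt_of_ne' (Nat.find_min hex (by omega))
  refine ⟨greedyDigits β (m + 1) u, m + 1 - N, by omega, greedyDigits_bounds hβ hN _, ?_,
    fun γ hγ => ?_⟩
  · rw [← pow_mul_eq_aeval_greedyDigits hlast, ← Nat.sub_add_cancel (show N ≤ m + 1 by omega),
      pow_add, Nat.add_sub_cancel, mul_assoc, mul_div_cancel₀ _ (by positivity), mul_comm]
  · rw [Function.iterate_succ_apply'] at hlast
    exact (one_le_floor_of_betaT_eq_zero hβ hlast_pos hlast).trans
      (floor_le_aeval_greedyDigits hβ hN m hγ)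

theorem pow_mul_mem_betaInt_of_conj {a : ℤ} {γ : ℝ} {L : ℕ} (hβ : 1 < β) (hβa : β ≤ a + 1)
    (hγ0 : 0 ≤ γ) (hγ1 : γ < 1) (hconj : aeval γ (minpoly ℚ β) = 0)
    (hsmall : (a : ℝ) ^ 2 * γ ^ (L + 1) < (1 - γ) ^ 2)
    {x y : ℝ} (hx : x ∈ betaInt β) (hy : y ∈ betaInt β) (hxy : x * y ∈ finBeta β) :
    β ^ L * (x * y) ∈ betaInt β := by
  by_contra hL
  have hβ0 : 0 < β := zero_lt_one.trans hβ
  have ha : (0 : ℝ) ≤ a := by linarith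
  have hbound : ∀ ds : List ℤ, (∀ d ∈ ds, 0 ≤ d ∧ (d : ℝ) < β) →
      0 ≤ aeval γ (digitsPoly ds) ∧ (1 - γ) * aeval γ (digitsPoly ds) ≤ a := by
    intro ds hds
    have hds' : ∀ d ∈ ds, 0 ≤ d ∧ d ≤ a := fun d hd => ⟨(hds d hd).1,
      Int.lt_add_one_iff.mp <| by exact_mod_cast (hds d hd).2.trans_le hβa⟩
    refine ⟨aeval_digitsPoly_nonneg (fun d hd => (hds d hd).1) hγ0,
      (one_sub_mul_aeval_digitsPoly_le hds' hγ0 hγ1.le).trans ?_⟩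
    exact mul_le_of_le_one_right ha (by linarith [pow_nonneg hγ0 ds.length])
  obtain ⟨xs, hxs, hx⟩ := exists_digitsPoly_of_mem_betaInt hβ0 hx
  obtain ⟨ys, hys, hy⟩ := exists_digitsPoly_of_mem_betaInt hβ0 hy
  obtain ⟨zs, k, hLk, -, hz, hz1⟩ := exists_digitsPoly_of_mem_finBeta hβ0 hxy hL
  set p := digitsPoly xs * digitsPoly ys * X ^ k - digitsPoly zs
  have hpβ : aeval β p = 0 := by
    simp only [p, map_sub, map_mul, map_pow, aeval_X, ← hx, ← hy, ← hz, abs_mul, sub_self]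
  have hpγ : aeval γ p = 0 := by
    obtain ⟨q, hq⟩ := minpoly.dvd ℚ β hpβ
    rw [hq, map_mul, hconj, zero_mul]
  simp only [p, map_sub, map_mul, map_pow, aeval_X, sub_eq_zero] at hpγ
  obtain ⟨hGx0, hGx⟩ := hbound xs hxs
  obtain ⟨hGy0, hGy⟩ := hbound ys hys
  have hγk : γ ^ k ≤ γ ^ (L + 1) := pow_le_pow_of_le_one hγ0 hγ1.le hLk
  have : (1 - γ) ^ 2 ≤ (a : ℝ) ^ 2 * γ ^ (L + 1) := calc
    (1 - γ) ^ 2 ≤ (1 - γ) ^ 2 * aeval γ (digitsPoly zs) :=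
      le_mul_of_one_le_right (sq_nonneg _) (hz1 γ hγ0)
    _ = ((1 - γ) * aeval γ (digitsPoly xs)) * ((1 - γ) * aeval γ (digitsPoly ys)) * γ ^ k := by
      rw [← hpγ]; ring
    _ ≤ a * a * γ ^ (L + 1) := by gcongr
    _ = (a : ℝ) ^ 2 * γ ^ (L + 1) := by ring
  linarith

end UpperBound

noncomputable def cubicPoly (a : ℤ) : ℚ[X] := X ^ 3 - C (a : ℚ) * X ^ 2 - C ((a : ℚ) - 1) * X + 1

lemma aeval_cubicPoly {K : Type*} [Field K] [CharZero K] (a : ℤ) (t : K) :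
    aeval t (cubicPoly a) = t ^ 3 - a * t ^ 2 - (a - 1) * t + 1 := by
  simp [cubicPoly]

lemma cubicPoly_monic (a : ℤ) : (cubicPoly a).Monic := by
  unfold cubicPoly; monicity!

lemma cubicPoly_natDegree (a : ℤ) : (cubicPoly a).natDegree = 3 := by
  unfold cubicPoly; compute_degree!

lemma cubic_ne_zero_of_rat (a : ℤ) (r : ℚ) : r ^ 3 - a * r ^ 2 - (a - 1) * r + 1 ≠ 0 := by
  intro hr
  obtain ⟨m, rfl⟩ : IsLocalization.IsInteger ℤ r :=
    isInteger_of_is_root_of_monic (p := X ^ 3 - C a * X ^ 2 - C (a - 1) * X + 1)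
      (by monicity!) (by simpa using hr)
  have hm : m * (m ^ 2 - a * m - (a - 1)) = -1 := by
    have : (m : ℚ) ^ 3 - a * m ^ 2 - (a - 1) * m + 1 = 0 := by simpa using hr
    exact_mod_cast (by linear_combination this : (m : ℚ) * (m ^ 2 - a * m - (a - 1)) = -1)
  rcases Int.eq_one_or_neg_one_of_mul_eq_neg_one hm with rfl | rfl <;> omega

lemma cubicPoly_irreducible (a : ℤ) : Irreducible (cubicPoly a) :=
  irreducible_of_degree_le_three_of_not_isRoot (by simp [cubicPoly_natDegree])
    fun r hr => cubic_ne_zero_of_rat a r (by simpa [cubicPoly] using hr)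

lemma minpoly_eq_cubicPoly {a : ℤ} {β : ℝ} (hroot : β ^ 3 - a * β ^ 2 - (a - 1) * β + 1 = 0) :
    minpoly ℚ β = cubicPoly a :=
  (minpoly.eq_of_irreducible_of_monic (cubicPoly_irreducible a)
    (by rw [aeval_cubicPoly]; exact hroot) (cubicPoly_monic a)).symm

lemma cubic_root_bounds {a : ℤ} (ha : 2 ≤ a) {β : ℝ} (hβ : 1 < β)
    (hroot : β ^ 3 - a * β ^ 2 - (a - 1) * β + 1 = 0) : a < β ∧ β < a + 1 := by
  have ha' : (2 : ℝ) ≤ a := by exact_mod_cast ha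
  have hβ0 : 0 < β := by linarith
  constructor <;> by_contra! h <;> nlinarith [mul_pos hβ0 hβ0]

lemma exists_cubic_root_mem_Ioo {a : ℤ} (ha : 2 ≤ a) :
    ∃ γ ∈ Set.Ioo (0 : ℝ) 1, γ ^ 3 - a * γ ^ 2 - (a - 1) * γ + 1 = 0 := by
  have ha' : (2 : ℝ) ≤ a := by exact_mod_cast ha
  exact intermediate_value_Ioo' zero_le_one (by fun_prop) ⟨by norm_num; linarith, by norm_num⟩

lemma cubic_root_small {a : ℤ} (ha : 3 ≤ a) {γ : ℝ} (hγ : γ ∈ Set.Ioo (0 : ℝ) 1)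
    (hroot : γ ^ 3 - a * γ ^ 2 - (a - 1) * γ + 1 = 0) : (a : ℝ) ^ 2 * γ ^ 3 < (1 - γ) ^ 2 := by
  obtain ⟨h0, h1⟩ := hγ
  have ha' : (3 : ℝ) ≤ a := by exact_mod_cast ha
  have hγa : (a - 1) * γ ≤ 1 := by nlinarith
  nlinarith [sq_nonneg γ, sq_nonneg (γ * a), mul_pos h0 h0, sq_nonneg (a * γ - 1),
    mul_pos (mul_pos h0 h0) h0]

lemma exists_mul_notMem_betaInt {a : ℤ} (ha : 2 ≤ a) {β : ℝ} (hβa : a < β)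
    (hroot : β ^ 3 - a * β ^ 2 - (a - 1) * β + 1 = 0) :
    ∃ x ∈ betaInt β, ∃ y ∈ betaInt β,
      x * y ∈ finBeta β ∧ x * y ∉ betaInt β ∧ β * (x * y) ∉ betaInt β := by
  have ha' : (2 : ℝ) ≤ a := by exact_mod_cast ha
  have hβ : 1 < β := by linarith
  have hβ0 : 0 < β := by linarith
  have hdigit : ∀ ds : List ℤ, (∀ d ∈ ds, 0 ≤ d ∧ d ≤ a - 1) → ∀ d ∈ ds, 0 ≤ d ∧ (d : ℝ) + 1 ≤ β :=
    fun ds hds d hd => ⟨(hds d hd).1, by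
      have : (d : ℝ) ≤ a - 1 := by exact_mod_cast (hds d hd).2
      linarith⟩
  set xs : List ℤ := [a - 1, a - 1, a - 1]
  set ys : List ℤ := [a - 2, a - 1, a - 1, a - 1]
  set zs : List ℤ := [a - 2, 1, a - 2, 1, a - 2, 0, 0, 0, 1]
  have hxs := hdigit xs (by
    simp only [xs, List.forall_mem_cons, List.not_mem_nil, IsEmpty.forall_iff, forall_const,
      and_true]
    omega)
  have hys := hdigit ys (by
    simp only [ys, List.forall_mem_cons, List.not_mem_nil, IsEmpty.forall_iff, forall_const,
      and_true]
    omega)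
  have hzs := hdigit zs (by
    simp only [zs, List.forall_mem_cons, List.not_mem_nil, IsEmpty.forall_iff, forall_const,
      and_true]
    omega)
  set x : ℝ := (a - 1) * (β ^ 2 + β + 1)
  set y : ℝ := (a - 2) * β ^ 3 + (a - 1) * (β ^ 2 + β + 1)
  have hx0 : 0 < x := mul_pos (by linarith) (by positivity)
  have hy0 : 0 < y := add_pos_of_nonneg_of_pos (mul_nonneg (by linarith) (by positivity)) hx0
  have hx : |x| / β ^ xs.length = evalDigits β xs := by
    simp only [x, xs, abs_of_pos hx0, evalDigits, List.length_cons, List.length_nil]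
    push_cast; field_simp; ring
  have hy : |y| / β ^ ys.length = evalDigits β ys := by
    simp only [y, ys, abs_of_pos hy0, evalDigits, List.length_cons, List.length_nil]
    push_cast; field_simp; ring
  have hz : |x * y| / β ^ 7 = evalDigits β zs := by
    simp only [x, y, zs, abs_of_pos (mul_pos hx0 hy0), evalDigits]
    push_cast; field_simp
    linear_combination ((2 - a) * β ^ 5 + (1 - a) * β ^ 4 + (3 - 2 * a) * β ^ 3 - a * β ^ 2
      + (1 - a) * β - 1) * hroot
  have hβz : |β * (x * y)| / β ^ 8 = evalDigits β zs := by
    rw [abs_mul, abs_of_pos hβ0, ← hz]; field_simp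
  refine ⟨x, mem_betaInt_of_evalDigits hβ0 hxs hx, y, mem_betaInt_of_evalDigits hβ0 hys hy,
    mem_finBeta_of_evalDigits hβ0 hzs hz, notMem_betaInt_of_evalDigits hβ hzs hz ?_,
    notMem_betaInt_of_evalDigits hβ hzs hβz ?_⟩ <;>
    simp only [zs, List.drop_succ_cons, List.drop_zero, evalDigits] <;> push_cast <;> positivity

theorem stmt15 (a : ℤ) (ha : 3 ≤ a) (β : ℝ) (hβ : 1 < β)
    (hroot : β ^ 3 - (a : ℝ) * β ^ 2 - ((a : ℝ) - 1) * β + 1 = 0) :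
    Lmul β = 2 := by
  obtain ⟨hβa, hβa1⟩ := cubic_root_bounds (by omega) hβ hroot
  obtain ⟨γ, hγ, hγroot⟩ := exists_cubic_root_mem_Ioo (by omega : 2 ≤ a)
  have hconj : aeval γ (minpoly ℚ β) = 0 := by
    rw [minpoly_eq_cubicPoly hroot, aeval_cubicPoly]; exact hγroot
  have h2 : 2 ∈ {L : ℕ | ∀ x ∈ betaInt β, ∀ y ∈ betaInt β,
      x * y ∈ finBeta β → β ^ L * (x * y) ∈ betaInt β} := fun x hx y hy hxy =>
    pow_mul_mem_betaInt_of_conj hβ hβa1.le hγ.1.le hγ.2 hconj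
      (cubic_root_small ha hγ hγroot) hx hy hxy
  obtain ⟨x, hx, y, hy, hxy, h0, h1⟩ := exists_mul_notMem_betaInt (by omega : 2 ≤ a) hβa hroot
  refine le_antisymm (Nat.sInf_le h2) (le_csInf ⟨2, h2⟩ fun L hL => ?_)
  by_contra! hL2
  interval_cases L
  · exact h0 (by simpa using hL x hx y hy hxy)
  · exact h1 (by simpa using hL x hx y hy hxy)
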